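/- Let A(x) = [[A₁, a, b],[aᵀ, α, x],[bᵀ, x, β]] be a partial real symmetric n×n matrix, where A₁ is a real symmetric (n−2)×(n−2) matrix, a, b ∈ ℝ^{n−2}, α, β ∈ ℝ, and x is the single unspecified entry (appearing symmetrically). Assume A(x) is partially positive semidefinite. Set A₂ = [[A₁, a],[aᵀ, α]], A₃ = [[A₁, b],[bᵀ, β]], and x_± = bᵀ A₁⁺ a ± √((A₂/A₁)(A₃/A₁)). Suppose that A₁ is invertible or rank A₁ = rank A₂. Then for x₀ ∈ ℝ, the completed matrix A(x₀) is positive semidefinite if and only if x₀ ∈ [x_−, x_+]. -/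

import Mathlib

/-!
Write `A(x) = [[A₁, B], [Bᵀ, D(x)]]` with `B = [a b]` and `D(x) = [[α, x], [x, β]]`.
Partial positive semidefiniteness makes `A₂` and `A₃` positive semidefinite, so `A₁` is
positive semidefinite and `a`, `b` lie in the range of `A₁`, i.e. `A₁ A₁⁺ B = B`. Under this range
condition the Schur complement criterion survives with `A₁⁺` in place of `A₁⁻¹`: `A(x)` is
positive semidefinite iff `D(x) - Bᵀ A₁⁺ B` is, and this `2 × 2` matrix has diagonal
`A₂/A₁, A₃/A₁ ≥ 0` and off-diagonal entry `x - bᵀ A₁⁺ a`, so it is positive semidefinite iff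
`(x - bᵀ A₁⁺ a)² ≤ (A₂/A₁)(A₃/A₁)`.
-/

open Matrix MeasureTheory

noncomputable section

attribute [local instance] Classical.propDecidable

/-- Hankel matrix of the sequence `(β a, β (a+1), …, β (a+2m))`. -/
def Hmat (β : ℕ → ℝ) (a m : ℕ) : Matrix (Fin (m + 1)) (Fin (m + 1)) ℝ :=
  Matrix.of fun i j => β (a + i + j)

/-- `j`-th column of the Hankel matrix of `(β a, …, β (a+2m))`. -/
def Hcol (β : ℕ → ℝ) (a m : ℕ) (j : ℕ) : Fin (m + 1) → ℝ := fun ℓ => β (a + j + ℓ)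

/-- The rank of the sequence `(β a, …, β (a+2m))`. -/
def seqRank (β : ℕ → ℝ) (a m : ℕ) : ℕ :=
  if IsUnit (Hmat β a m).det then m + 1
  else sInf {i : ℕ | Hcol β a m i ∈ Submodule.span ℝ (Hcol β a m '' Set.Iio i)}

/-- Moore–Penrose pseudoinverse of a real matrix. -/
def pinv {n m : Type*} [Fintype n] [Fintype m] (A : Matrix n m ℝ) : Matrix m n ℝ :=
  if h : ∃ B : Matrix m n ℝ,
      A * B * A = A ∧ B * A * B = B ∧ (A * B)ᵀ = A * B ∧ (B * A)ᵀ = B * A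
  then h.choose else 0

/-- `μ` is a representing measure on `ℝ` for the sequence `(β 0, …, β n)`. -/
def IsRepMeas (β : ℕ → ℝ) (n : ℕ) (μ : Measure ℝ) : Prop :=
  (∀ i ≤ n, Integrable (fun x : ℝ => x ^ i) μ) ∧ (∀ i ≤ n, β i = ∫ x : ℝ, x ^ i ∂μ)

/-- `μ` is an `r`-atomic measure. -/
def IsAtomicM {α : Type*} [MeasurableSpace α] (μ : Measure α) (r : ℕ) : Prop :=
  ∃ (x : Fin r → α) (c : Fin r → ℝ), Function.Injective x ∧ (∀ ℓ, 0 < c ℓ) ∧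
    μ = ∑ ℓ : Fin r, (ENNReal.ofReal (c ℓ)) • Measure.dirac (x ℓ)

/-- `(β 0, …, β n)` has a representing measure on `ℝ`. -/
def HasRep (β : ℕ → ℝ) (n : ℕ) : Prop := ∃ μ : Measure ℝ, IsRepMeas β n μ

/-- `(β 0, …, β n)` has an `r`-atomic representing measure on `ℝ`. -/
def HasAtomicRep (β : ℕ → ℝ) (n r : ℕ) : Prop :=
  ∃ μ : Measure ℝ, IsRepMeas β n μ ∧ IsAtomicM μ r

/-- The partial Hankel matrix of `(β 0, …, β 2k)`, with the entries at positions `(i, j)`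
with `i + j ∈ miss` unspecified, is partially positive semidefinite: every fully specified
principal submatrix is positive semidefinite. -/
def PartialPSD (β : ℕ → ℝ) (k : ℕ) (miss : Set ℕ) : Prop :=
  ∀ S : Finset (Fin (k + 1)),
    (∀ i ∈ S, ∀ j ∈ S, ((i : ℕ) + (j : ℕ)) ∉ miss) →
    Matrix.PosSemidef ((Hmat β 0 k).submatrix
      (fun a : S => (a : Fin (k + 1))) (fun a : S => (a : Fin (k + 1))))

/-- The bordered matrix `[[A, vᵀ],[v, c]]`. -/
def borderB {n : Type*} [Fintype n] (A : Matrix n n ℝ) (v : n → ℝ) (c : ℝ) :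
    Matrix (n ⊕ Unit) (n ⊕ Unit) ℝ :=
  Matrix.fromBlocks A (Matrix.of fun i _ => v i) (Matrix.of fun _ j => v j)
    (Matrix.of fun _ _ => c)

/-- The bordered matrix `[[c, v],[vᵀ, A]]`. -/
def borderT {n : Type*} [Fintype n] (c : ℝ) (v : n → ℝ) (A : Matrix n n ℝ) :
    Matrix (Unit ⊕ n) (Unit ⊕ n) ℝ :=
  Matrix.fromBlocks (Matrix.of fun _ _ => c) (Matrix.of fun _ j => v j)
    (Matrix.of fun i _ => v i) A

/-- The partial matrix `A(x) = [[A₁, a, b],[aᵀ, α, x],[bᵀ, x, β]]`, where the entry `x`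
(at the positions `(inr 0, inr 1)` and `(inr 1, inr 0)`) is unspecified. -/
def Amat {m : ℕ} (A₁ : Matrix (Fin m) (Fin m) ℝ) (a b : Fin m → ℝ) (α βv x : ℝ) :
    Matrix (Fin m ⊕ Fin 2) (Fin m ⊕ Fin 2) ℝ :=
  Matrix.fromBlocks A₁
    (Matrix.of fun i j => if j = 0 then a i else b i)
    (Matrix.of fun i j => if i = 0 then a j else b j)
    (Matrix.of fun i j =>
      if i = 0 then (if j = 0 then α else x) else (if j = 0 then x else βv))

/-- `A(x)` is partially positive semidefinite: every principal submatrix not containing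
the unspecified entry `x` is positive semidefinite. -/
def PartialPSDCompl {m : ℕ} (A₁ : Matrix (Fin m) (Fin m) ℝ) (a b : Fin m → ℝ)
    (α βv : ℝ) : Prop :=
  ∀ S : Finset (Fin m ⊕ Fin 2), ¬ (Sum.inr 0 ∈ S ∧ Sum.inr 1 ∈ S) →
    Matrix.PosSemidef ((Amat A₁ a b α βv 0).submatrix
      (fun p : S => (p : Fin m ⊕ Fin 2)) (fun p : S => (p : Fin m ⊕ Fin 2)))

namespace Matrix

section GeneralizedSchurComplement

variable {m n R : Type*} [Fintype m] [Fintype n] [CommRing R] [StarRing R]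
  {A G : Matrix m m R} {B : Matrix m n R}

omit [Fintype n] in
theorem isHermitian_conjTranspose_mul_mul_of_mul_mul_eq (hA : A.IsHermitian)
    (hG : A * G * B = B) : (Bᴴ * G * B).IsHermitian := by
  have h : Bᴴ * G * B = (G * B)ᴴ * A * (G * B) := by
    nth_rewrite 1 [← hG]
    simp only [conjTranspose_mul, hA.eq, Matrix.mul_assoc]
  rw [h]
  exact isHermitian_conjTranspose_mul_mul _ hA

theorem schur_complement_eq₁₁_of_mul_mul_eq (D : Matrix n n R) (x : m → R) (y : n → R)
    (hA : A.IsHermitian) (hG : A * G * B = B) :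
    star (x ⊕ᵥ y) ᵥ* fromBlocks A B Bᴴ D ⬝ᵥ (x ⊕ᵥ y) =
      star (x + (G * B) *ᵥ y) ᵥ* A ⬝ᵥ (x + (G * B) *ᵥ y) +
        star y ᵥ* (D - Bᴴ * G * B) ⬝ᵥ y := by
  have hAGB : A *ᵥ ((G * B) *ᵥ y) = B *ᵥ y := by rw [mulVec_mulVec, ← Matrix.mul_assoc, hG]
  have hGBA : star ((G * B) *ᵥ y) ᵥ* A = star (B *ᵥ y) := by
    rw [← hAGB, star_mulVec A, hA.eq]
  simp only [Function.star_sumElim, vecMul_fromBlocks, sumElim_dotProduct_sumElim, add_vecMul,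
    add_dotProduct, hGBA, ← dotProduct_mulVec, hAGB, dotProduct_add, star_add]
  simp only [Sum.elim_comp_inl, Sum.elim_comp_inr, sub_mulVec, dotProduct_sub, star_mulVec,
    dotProduct_mulVec, vecMul_vecMul, Matrix.mul_assoc]
  abel

theorem PosSemidef.fromBlocks₁₁_of_mul_mul_eq [PartialOrder R] [StarOrderedRing R]
    (D : Matrix n n R) (hA : A.PosSemidef) (hG : A * G * B = B) :
    (fromBlocks A B Bᴴ D).PosSemidef ↔ (D - Bᴴ * G * B).PosSemidef := by
  have hBGB := isHermitian_conjTranspose_mul_mul_of_mul_mul_eq hA.isHermitian hG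
  have hD : (fromBlocks A B Bᴴ D).IsHermitian ↔ (D - Bᴴ * G * B).IsHermitian := by
    rw [isHermitian_fromBlocks_iff]
    exact ⟨fun h ↦ h.2.2.2.sub hBGB, fun h ↦ ⟨hA.isHermitian, rfl, conjTranspose_conjTranspose B,
      sub_add_cancel D _ ▸ h.add hBGB⟩⟩
  rw [posSemidef_iff_dotProduct_mulVec, posSemidef_iff_dotProduct_mulVec, hD]
  refine and_congr_right fun _ ↦ ⟨fun h y ↦ ?_, fun h z ↦ ?_⟩
  · have := h (-((G * B) *ᵥ y) ⊕ᵥ y)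
    rwa [dotProduct_mulVec, schur_complement_eq₁₁_of_mul_mul_eq D _ _ hA.isHermitian hG,
      neg_add_cancel, star_zero, zero_vecMul, zero_dotProduct, zero_add,
      ← dotProduct_mulVec] at this
  · rw [dotProduct_mulVec, ← Sum.elim_comp_inl_inr z,
      schur_complement_eq₁₁_of_mul_mul_eq D _ _ hA.isHermitian hG, ← dotProduct_mulVec,
      ← dotProduct_mulVec]
    exact add_nonneg (hA.dotProduct_mulVec_nonneg _) (h _)

end GeneralizedSchurComplement

theorem PosSemidef.submatrix_of_forall_mem {ι κ R : Type*} [Ring R] [PartialOrder R]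
    [StarRing R] {M : Matrix ι ι R} {S : Finset ι}
    (h : (M.submatrix ((↑) : S → ι) (↑)).PosSemidef) (f : κ → ι) (hf : ∀ k, f k ∈ S) :
    (M.submatrix f f).PosSemidef :=
  h.submatrix fun k ↦ ⟨f k, hf k⟩

theorem mul_transpose_of {l n k R : Type*} [Fintype n] [NonUnitalNonAssocSemiring R]
    (M : Matrix l n R) (v : k → n → R) : M * (of v)ᵀ = (of fun j ↦ M *ᵥ v j)ᵀ :=
  rfl

theorem conjTranspose_mul_mul_of_transpose_fin_two {n : Type*} [Fintype n] (a b : n → ℝ)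
    (G : Matrix n n ℝ) :
    (of ![a, b])ᵀᴴ * G * (of ![a, b])ᵀ =
      !![a ⬝ᵥ G *ᵥ a, a ⬝ᵥ G *ᵥ b; b ⬝ᵥ G *ᵥ a, b ⬝ᵥ G *ᵥ b] := by
  rw [conjTranspose_eq_transpose_of_trivial, transpose_transpose, Matrix.mul_assoc,
    mul_transpose_of]
  ext i j
  fin_cases i <;> fin_cases j <;> rfl

theorem posSemidef_fin_two_iff {p q r : ℝ} :
    !![p, q; q, r].PosSemidef ↔ 0 ≤ p ∧ 0 ≤ r ∧ q ^ 2 ≤ p * r := by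
  refine ⟨fun h ↦ ⟨by simpa using h.diag_nonneg (i := 0), by simpa using h.diag_nonneg (i := 1),
    by nlinarith [h.det_nonneg, det_fin_two_of p q q r]⟩, fun ⟨hp, hr, hq⟩ ↦ ?_⟩
  refine .of_dotProduct_mulVec_nonneg ?_ fun z ↦ ?_
  · ext i j
    fin_cases i <;> fin_cases j <;> simp
  · simp only [dotProduct, Pi.star_apply, star_trivial, mulVec, of_apply, cons_val',
      cons_val_fin_one, Fin.sum_univ_two, cons_val_zero, cons_val_one]
    rcases hp.eq_or_lt with rfl | hp
    · obtain rfl : q = 0 := by nlinarith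
      nlinarith [mul_nonneg hr (mul_self_nonneg (z 1))]
    · nlinarith [sq_nonneg (p * z 0 + q * z 1), mul_nonneg (sub_nonneg.mpr hq) (sq_nonneg (z 1))]

section MoorePenrose

variable {n : Type*} [Fintype n] [DecidableEq n] {A : Matrix n n ℝ}

/- The functional calculus of `x ↦ x⁻¹` (with `0⁻¹ = 0`) inverts `A` on its range and
vanishes on its kernel. -/
theorem IsHermitian.exists_penrose (hA : A.IsHermitian) :
    ∃ B : Matrix n n ℝ,
      A * B * A = A ∧ B * A * B = B ∧ (A * B)ᵀ = A * B ∧ (B * A)ᵀ = B * A := by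
  have hc (f : ℝ → ℝ) : ContinuousOn f (spectrum ℝ A) := finite_real_spectrum.continuousOn f
  have hA' : IsSelfAdjoint A := hA
  have hmul (f g : ℝ → ℝ) : cfc f A * cfc g A = cfc (fun x ↦ f x * g x) A :=
    (cfc_mul f g A (hc f) (hc g)).symm
  have hT (f : ℝ → ℝ) : (cfc f A)ᵀ = cfc f A := by
    rw [← conjTranspose_eq_transpose_of_trivial]
    exact cfc_predicate f A
  rw [← cfc_id' ℝ A]
  refine ⟨cfc (fun x : ℝ ↦ x⁻¹) A, ?_, ?_, ?_, ?_⟩ <;> simp only [hmul, hT] <;> congr 1 <;>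
    funext x
  · exact mul_inv_mul_cancel x
  · simpa using mul_inv_mul_cancel x⁻¹

theorem IsHermitian.penrose_pinv (hA : A.IsHermitian) :
    A * pinv A * A = A ∧ pinv A * A * pinv A = pinv A ∧ (A * pinv A)ᵀ = A * pinv A ∧
      (pinv A * A)ᵀ = pinv A * A := by
  have h := hA.exists_penrose
  rw [pinv, dif_pos h]
  exact h.choose_spec

theorem IsHermitian.mul_self_mul_pinv (hA : A.IsHermitian) : A * A * pinv A = A := by
  obtain ⟨h₁, -, h₃, -⟩ := hA.penrose_pinv
  have hAt : Aᵀ = A := by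
    rw [← conjTranspose_eq_transpose_of_trivial]
    exact hA.eq
  calc A * A * pinv A = A * (A * pinv A)ᵀ := by rw [h₃, Matrix.mul_assoc]
    _ = (A * pinv A * A)ᵀ := by rw [transpose_mul, transpose_mul, hAt, transpose_mul, hAt]
    _ = A := by rw [h₁, hAt]

/- `q = v - A A⁺ v` lies in the kernel of `A`, so it is orthogonal both to `v` and to the
range of `A`, hence to itself. -/
theorem IsHermitian.mulVec_pinv_mulVec (hA : A.IsHermitian) {v : n → ℝ}
    (hv : ∀ x, A *ᵥ x = 0 → v ⬝ᵥ x = 0) : A *ᵥ (pinv A *ᵥ v) = v := by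
  set q := v - A *ᵥ (pinv A *ᵥ v)
  have hAq : A *ᵥ q = 0 := by
    rw [mulVec_sub, mulVec_mulVec, mulVec_mulVec, hA.mul_self_mul_pinv, sub_self]
  have hq : q ⬝ᵥ q = 0 := by
    rw [sub_dotProduct, hv q hAq, dotProduct_comm, dotProduct_mulVec, ← mulVec_transpose,
      ← conjTranspose_eq_transpose_of_trivial, hA.eq, hAq, zero_dotProduct, sub_zero]
  exact (sub_eq_zero.mp (dotProduct_self_eq_zero.mp hq)).symm

end MoorePenrose

end Matrix

section Bordered

variable {n : Type*} [Fintype n] {A : Matrix n n ℝ} {v : n → ℝ} {c : ℝ}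

theorem borderB_eq_fromBlocks (A : Matrix n n ℝ) (v : n → ℝ) (c : ℝ) :
    borderB A v c =
      fromBlocks A (replicateCol Unit v) (replicateCol Unit v)ᴴ (of fun _ _ ↦ c) := by
  simp only [borderB, conjTranspose_replicateCol, star_trivial]
  rfl

theorem Matrix.PosSemidef.of_borderB (h : (borderB A v c).PosSemidef) : A.PosSemidef :=
  h.submatrix Sum.inl

variable [DecidableEq n]

theorem Matrix.PosSemidef.mulVec_pinv_mulVec_of_borderB (h : (borderB A v c).PosSemidef) :
    A *ᵥ (pinv A *ᵥ v) = v := by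
  refine h.of_borderB.isHermitian.mulVec_pinv_mulVec fun x hx ↦ ?_
  -- `(x, 0)` is isotropic for the psd matrix `borderB A v c`, hence in its kernel.
  have hker := (h.dotProduct_mulVec_zero_iff (x ⊕ᵥ 0)).mp (by
    simp [borderB, fromBlocks_mulVec, hx])
  have hlast := congrFun hker (Sum.inr ())
  simp only [borderB, fromBlocks_mulVec] at hlast
  simpa [mulVec, dotProduct_comm] using hlast

theorem Matrix.PosSemidef.dotProduct_pinv_mulVec_le_of_borderB
    (h : (borderB A v c).PosSemidef) : v ⬝ᵥ pinv A *ᵥ v ≤ c := by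
  have hG : A * pinv A * replicateCol Unit v = replicateCol Unit v := by
    rw [Matrix.mul_assoc, ← replicateCol_mulVec, ← replicateCol_mulVec,
      h.mulVec_pinv_mulVec_of_borderB]
  have hS := ((h.of_borderB.fromBlocks₁₁_of_mul_mul_eq _ hG).mp
    (borderB_eq_fromBlocks A v c ▸ h)).diag_nonneg (i := ())
  rwa [conjTranspose_replicateCol, star_trivial, Matrix.mul_assoc, ← replicateCol_mulVec,
    sub_apply, replicateRow_mul_replicateCol_apply, of_apply, sub_nonneg] at hS

end Bordered

section Completion

variable {m : ℕ} {A₁ : Matrix (Fin m) (Fin m) ℝ} {a b : Fin m → ℝ} {α βv : ℝ}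

theorem PartialPSDCompl.posSemidef_borderB_fst (h : PartialPSDCompl A₁ a b α βv) :
    (borderB A₁ a α).PosSemidef := by
  have hS := (h (Finset.univ.filter (· ≠ Sum.inr 1)) (by simp)).submatrix_of_forall_mem
    (Sum.elim Sum.inl fun _ : Unit ↦ Sum.inr 0) (by rintro (i | _) <;> simp)
  convert hS using 1
  ext (i | _) (j | _) <;> simp [Amat, borderB]

theorem PartialPSDCompl.posSemidef_borderB_snd (h : PartialPSDCompl A₁ a b α βv) :
    (borderB A₁ b βv).PosSemidef := by
  have hS := (h (Finset.univ.filter (· ≠ Sum.inr 0)) (by simp)).submatrix_of_forall_mem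
    (Sum.elim Sum.inl fun _ : Unit ↦ Sum.inr 1) (by rintro (i | _) <;> simp)
  convert hS using 1
  ext (i | _) (j | _) <;> simp [Amat, borderB]

theorem PartialPSDCompl.mul_pinv_mul_eq (h : PartialPSDCompl A₁ a b α βv) :
    A₁ * pinv A₁ * (of ![a, b])ᵀ = (of ![a, b])ᵀ := by
  rw [mul_transpose_of]
  congr 2
  funext j
  fin_cases j
  · simpa [← mulVec_mulVec] using h.posSemidef_borderB_fst.mulVec_pinv_mulVec_of_borderB
  · simpa [← mulVec_mulVec] using h.posSemidef_borderB_snd.mulVec_pinv_mulVec_of_borderB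

theorem Amat_eq_fromBlocks (A₁ : Matrix (Fin m) (Fin m) ℝ) (a b : Fin m → ℝ) (α βv x : ℝ) :
    Amat A₁ a b α βv x = fromBlocks A₁ (of ![a, b])ᵀ (of ![a, b])ᵀᴴ !![α, x; x, βv] := by
  ext (i | i) (j | j) <;> (try fin_cases i) <;> (try fin_cases j) <;> simp [Amat]

end Completion

theorem psd_completion_general {m : ℕ} (A₁ : Matrix (Fin m) (Fin m) ℝ)
    (a b : Fin m → ℝ) (α βv : ℝ)
    (hppsd : PartialPSDCompl A₁ a b α βv) :
    ∀ x₀ : ℝ, (Amat A₁ a b α βv x₀).PosSemidef ↔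
      x₀ ∈ Set.Icc
        (b ⬝ᵥ (pinv A₁) *ᵥ a -
          Real.sqrt ((α - a ⬝ᵥ (pinv A₁) *ᵥ a) * (βv - b ⬝ᵥ (pinv A₁) *ᵥ b)))
        (b ⬝ᵥ (pinv A₁) *ᵥ a +
          Real.sqrt ((α - a ⬝ᵥ (pinv A₁) *ᵥ a) * (βv - b ⬝ᵥ (pinv A₁) *ᵥ b))) := by
  intro x₀
  have ha := hppsd.posSemidef_borderB_fst
  have hb := hppsd.posSemidef_borderB_snd
  have hA₁ := ha.of_borderB
  have hG := hppsd.mul_pinv_mul_eq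
  have hsymm : a ⬝ᵥ pinv A₁ *ᵥ b = b ⬝ᵥ pinv A₁ *ᵥ a := by
    have h := (isHermitian_conjTranspose_mul_mul_of_mul_mul_eq hA₁.isHermitian hG).apply 1 0
    rw [conjTranspose_mul_mul_of_transpose_fin_two] at h
    simpa using h
  have hs := sub_nonneg.mpr ha.dotProduct_pinv_mulVec_le_of_borderB
  have ht := sub_nonneg.mpr hb.dotProduct_pinv_mulVec_le_of_borderB
  rw [Amat_eq_fromBlocks, hA₁.fromBlocks₁₁_of_mul_mul_eq _ hG,
    conjTranspose_mul_mul_of_transpose_fin_two, hsymm]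
  simp only [of_sub_of, cons_sub_cons, empty_sub_empty]
  rw [posSemidef_fin_two_iff, and_iff_right hs, and_iff_right ht, ← Set.mem_Icc_iff_abs_le,
    abs_sub_comm, Real.le_sqrt (abs_nonneg _) (mul_nonneg hs ht), sq_abs]

/-- Positive semidefinite completions of a partially positive semidefinite matrix with one
unknown entry: `A(x₀)` is psd iff `x₀ ∈ [x₋, x₊]`. -/
theorem psd_completion {m : ℕ} (A₁ : Matrix (Fin m) (Fin m) ℝ) (hA₁ : A₁.IsSymm)
    (a b : Fin m → ℝ) (α βv : ℝ)
    (hppsd : PartialPSDCompl A₁ a b α βv)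
    (hassump : IsUnit A₁.det ∨ A₁.rank = (borderB A₁ a α).rank) :
    ∀ x₀ : ℝ, (Amat A₁ a b α βv x₀).PosSemidef ↔
      x₀ ∈ Set.Icc
        (b ⬝ᵥ (pinv A₁) *ᵥ a -
          Real.sqrt ((α - a ⬝ᵥ (pinv A₁) *ᵥ a) * (βv - b ⬝ᵥ (pinv A₁) *ᵥ b)))
        (b ⬝ᵥ (pinv A₁) *ᵥ a +
          Real.sqrt ((α - a ⬝ᵥ (pinv A₁) *ᵥ a) * (βv - b ⬝ᵥ (pinv A₁) *ᵥ b))) :=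
  psd_completion_general A₁ a b α βv hppsd
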